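/- Define κ : ℝ → ℝ by κ(t) = {t/2} + 1/2 − {t/2 + 1/2}, where {x} is the fractional part of x. Then for every complex number s with Re(s) > 0, the Dirichlet eta function satisfies η(s) = s · ∫₁^∞ κ(t) · t^(−s−1) dt. -/

import Mathlib

noncomputable def kappa (t : ℝ) : ℝ := Int.fract (t / 2) + 1 / 2 - Int.fract (t / 2 + 1 / 2)

noncomputable def dirichletEta (s : ℂ) : ℂ :=
  ∑' k : ℕ, (1 / ((2 * (k : ℂ) + 1)) ^ s - 1 / ((2 * (k : ℂ) + 2)) ^ s)

/-!
On `[1, ∞)` the function `κ` is the indicator of `⋃ₖ [2k+1, 2k+2)`. Cutting `[1, ∞)` into the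
blocks `[2k+1, 2k+3)`, the `k`-th block contributes
`∫_{2k+1}^{2k+2} t^(-s-1) dt = ((2k+1)^(-s) - (2k+2)^(-s)) / s`, and for `Re s > 0` the integral
converges absolutely, so it is the sum of these contributions, i.e. `η(s) / s`.
-/

open MeasureTheory Set

theorem hasSum_setIntegral_Ico_of_monotone {E : Type*} [NormedAddCommGroup E] [NormedSpace ℝ E]
    {μ : Measure ℝ} {f : ℝ → E} {b : ℕ → ℝ} (hb : Monotone b) (hb' : ¬BddAbove (range b))
    (hf : IntegrableOn f (Ici (b 0)) μ) :
    HasSum (fun n ↦ ∫ x in Ico (b n) (b (n + 1)), f x ∂μ) (∫ x in Ici (b 0), f x ∂μ) := by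
  have hU : ⋃ n, Ico (b n) (b (n + 1)) = Ici (b 0) :=
    iUnion_Ico_map_succ_eq_Ici (fun n ↦ hb n.zero_le) hb'
  rw [← hU] at hf ⊢
  exact hasSum_integral_iUnion (fun _ ↦ measurableSet_Ico) hb.pairwise_disjoint_on_Ico_succ hf

theorem kappa_eq_zero_of_mem_Ico {k : ℤ} {t : ℝ} (ht : t ∈ Ico (2 * k : ℝ) (2 * k + 1)) :
    kappa t = 0 := by
  have h₁ : Int.fract (t / 2) = t / 2 - k :=
    Int.fract_eq_iff.2 ⟨by linarith [ht.1], by linarith [ht.2], k, by ring⟩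
  have h₂ : Int.fract (t / 2 + 1 / 2) = t / 2 + 1 / 2 - k :=
    Int.fract_eq_iff.2 ⟨by linarith [ht.1], by linarith [ht.2], k, by ring⟩
  rw [kappa, h₁, h₂]
  ring

theorem kappa_eq_one_of_mem_Ico {k : ℤ} {t : ℝ} (ht : t ∈ Ico (2 * k + 1 : ℝ) (2 * k + 2)) :
    kappa t = 1 := by
  have h₁ : Int.fract (t / 2) = t / 2 - k :=
    Int.fract_eq_iff.2 ⟨by linarith [ht.1], by linarith [ht.2], k, by ring⟩
  have h₂ : Int.fract (t / 2 + 1 / 2) = t / 2 + 1 / 2 - (k + 1) :=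
    Int.fract_eq_iff.2 ⟨by linarith [ht.1], by linarith [ht.2], k + 1, by push_cast; ring⟩
  rw [kappa, h₁, h₂]
  ring

theorem kappa_eq_zero_or_eq_one (t : ℝ) : kappa t = 0 ∨ kappa t = 1 := by
  obtain ⟨hk₁, hk₂⟩ : (⌊t / 2⌋ : ℝ) ≤ t / 2 ∧ t / 2 < ⌊t / 2⌋ + 1 :=
    ⟨Int.floor_le _, Int.lt_floor_add_one _⟩
  rcases lt_or_ge t (2 * ⌊t / 2⌋ + 1) with h | h
  · exact .inl (kappa_eq_zero_of_mem_Ico ⟨by linarith, h⟩)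
  · exact .inr (kappa_eq_one_of_mem_Ico ⟨h, by linarith⟩)

@[fun_prop]
theorem measurable_kappa : Measurable kappa := by
  unfold kappa
  fun_prop

theorem integrableOn_kappa_mul_cpow {s : ℂ} (hs : 0 < s.re) :
    IntegrableOn (fun t : ℝ ↦ (kappa t : ℂ) * (t : ℂ) ^ (-s - 1)) (Ioi 1) := by
  refine Integrable.bdd_mul (c := 1) (integrableOn_Ioi_cpow_of_lt (by simp; linarith) one_pos)
    (by fun_prop) (ae_of_all _ fun t ↦ ?_)
  rcases kappa_eq_zero_or_eq_one t with h | h <;> simp [h]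

theorem setIntegral_Ico_kappa_mul (k : ℤ) (g : ℝ → ℂ) :
    ∫ t in Ico (2 * k + 1 : ℝ) (2 * k + 3), (kappa t : ℂ) * g t =
      ∫ t in Ico (2 * k + 1 : ℝ) (2 * k + 2), g t := by
  have hκ : EqOn (fun t ↦ (kappa t : ℂ) * g t) ((Ico (2 * k + 1 : ℝ) (2 * k + 2)).indicator g)
      (Ico (2 * k + 1 : ℝ) (2 * k + 3)) := by
    intro t ht
    by_cases h : t < 2 * k + 2
    · simp [indicator_of_mem (show t ∈ Ico _ _ from ⟨ht.1, h⟩), kappa_eq_one_of_mem_Ico ⟨ht.1, h⟩]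
    · have h₀ : kappa t = 0 := kappa_eq_zero_of_mem_Ico (k := k + 1)
        ⟨by push_cast; linarith, by push_cast; linarith [ht.2]⟩
      simp [indicator_of_notMem (fun h' : t ∈ Ico _ _ ↦ h h'.2), h₀]
  rw [setIntegral_congr_fun measurableSet_Ico hκ, setIntegral_indicator measurableSet_Ico,
    inter_eq_right.2 (Ico_subset_Ico_right (by linarith))]

theorem setIntegral_Ico_cpow_neg_sub_one {s : ℂ} (hs : s ≠ 0) {a b : ℝ} (ha : 0 < a) (hab : a ≤ b) :
    ∫ t in Ico a b, (t : ℂ) ^ (-s - 1) = ((a : ℂ) ^ (-s) - (b : ℂ) ^ (-s)) / s := by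
  have hr : -s - 1 ≠ -1 := fun h ↦ hs (by linear_combination -h)
  have h0 : (0 : ℝ) ∉ uIcc a b := by
    rw [uIcc_of_le hab]
    exact fun h ↦ ha.not_ge h.1
  rw [integral_Ico_eq_integral_Ioo, ← integral_Ioc_eq_integral_Ioo,
    ← intervalIntegral.integral_of_le hab, integral_cpow (.inr ⟨hr, h0⟩), sub_add_cancel,
    div_neg, ← neg_div, neg_sub]

theorem eta_eq_integral (s : ℂ) (hs : 0 < s.re) :
    dirichletEta s = s * ∫ t in Set.Ioi (1 : ℝ), (kappa t : ℂ) * (t : ℂ) ^ (-s - 1) := by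
  have hs₀ : s ≠ 0 := fun h ↦ by simp [h] at hs
  have hb : Monotone fun n : ℕ ↦ (2 * n + 1 : ℝ) := fun _ _ h ↦ by dsimp only; gcongr
  have hb' : ¬BddAbove (range fun n : ℕ ↦ (2 * n + 1 : ℝ)) := by
    rintro ⟨M, hM⟩
    obtain ⟨n, hn⟩ := exists_nat_gt M
    linarith [hM ⟨n, rfl⟩]
  have hsum := hasSum_setIntegral_Ico_of_monotone hb hb'
    (f := fun t ↦ (kappa t : ℂ) * (t : ℂ) ^ (-s - 1)) (μ := volume)
    (by rw [Nat.cast_zero, mul_zero, zero_add, integrableOn_Ici_iff_integrableOn_Ioi]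
        exact integrableOn_kappa_mul_cpow hs)
  simp only [Nat.cast_zero, mul_zero, zero_add] at hsum
  rw [dirichletEta, ← integral_Ici_eq_integral_Ioi, ← hsum.tsum_eq, ← tsum_mul_left]
  congr 1 with n
  have hblock := setIntegral_Ico_kappa_mul n fun t ↦ (t : ℂ) ^ (-s - 1)
  push_cast at hblock
  rw [show (2 * ((n + 1 : ℕ) : ℝ) + 1) = 2 * n + 3 by push_cast; ring, hblock,
    setIntegral_Ico_cpow_neg_sub_one hs₀ (by positivity) (by linarith), mul_div_cancel₀ _ hs₀]
  simp [Complex.cpow_neg]
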